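/- Fix an integer k with 1 ≤ k ≤ N−1 and a function γ : ℝ → ℂ, and let 𝓝_{k,γ} be the linear operator on H_N defined by 𝓝_{k,γ}ψ^N_n := γ(nℏ)·ψ^N_{n+k} for 0 ≤ n ≤ N−1−k and 𝓝_{k,γ}ψ^N_n := 0 for N−1−k < n ≤ N−1. Then for every z ∈ ℂ∖{0}: 𝓝_{k,γ}ψ^a_z = Σ_{n=k}^{N−1} conj(z)^(−k)·μ_k(n)·√(C^N_n/C^N_{n−k})·γ((n−k)ℏ)·ã(τ(z)/ℏ − (n−k))·conj(φ_n(z))·φ_n. (This expresses 𝓝_{k,γ}ψ^a_z = ψ^{Σ_{k,γ}(z)a}_z, the upper-diagonal case of Proposition 3.4.) -/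

import Mathlib

open MeasureTheory Complex Real

noncomputable section

/-- The measure `dμ_N(z) = (1/π)·(1+|z|²)^{-(N+1)} dA(z)` on `ℂ`. -/
def muN (N : ℕ) : Measure ℂ :=
  volume.withDensity (fun z => ENNReal.ofReal (1 / (Real.pi * (1 + ‖z‖ ^ 2) ^ (N + 1))))

/-- The basis vectors `φ_n(z) = √(N!/(n!(N−1−n)!))·zⁿ`. -/
def phiN (N n : ℕ) : ℂ → ℂ :=
  fun z => (Real.sqrt ((N.factorial : ℝ) / (n.factorial * (N - 1 - n).factorial)) : ℂ) * z ^ n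

/-- The coherent state `ρ_{z₀}(z) = N·(1+conj(z₀)·z)^{N−1}`. -/
def rhoN (N : ℕ) (z₀ : ℂ) : ℂ → ℂ :=
  fun z => (N : ℂ) * (1 + (starRingEnd ℂ) z₀ * z) ^ (N - 1)

/-- The inner product `⟨P,Q⟩ = ∫ P(z) conj(Q(z)) dμ_N(z)`, linear in the first argument. -/
def hermN (N : ℕ) (P Q : ℂ → ℂ) : ℂ :=
  ∫ z, P z * (starRingEnd ℂ) (Q z) ∂(muN N)

/-- The Fourier transform `ã(y) = (2π)^{-1/2} ∫ e^{ixy} a(x) dx`. -/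
def tildeF (a : ℝ → ℂ) (y : ℝ) : ℂ :=
  (Real.sqrt (2 * Real.pi))⁻¹ * ∫ x : ℝ, Complex.exp (Complex.I * x * y) * a x

/-- `τ(z) = |z|²/(1+|z|²)`. -/
def tauS (z : ℂ) : ℝ := ‖z‖ ^ 2 / (1 + ‖z‖ ^ 2)

/-- The building vector `ψ^a_z = ∫ a(t)·e^{iτ(z)t/ℏ}·ρ_{e^{it}z} dt/√(2π)`. -/
def psiA (N : ℕ) (ℏ : ℝ) (a : ℝ → ℂ) (z : ℂ) : ℂ → ℂ :=
  fun w => ∫ t : ℝ, a t * Complex.exp (Complex.I * (tauS z) * t / (ℏ : ℂ)) *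
    rhoN N (Complex.exp (Complex.I * t) * z) w / (Real.sqrt (2 * Real.pi) : ℂ)

/-- `C^N_n = N·binom(N−1,n)·∫₀¹ |ã((τ−nℏ)/ℏ)|²·(τ/(1−τ))ⁿ·(1−τ)^{N−1} dτ`. -/
def CNn (N : ℕ) (ℏ : ℝ) (a : ℝ → ℂ) (n : ℕ) : ℝ :=
  N * ((N - 1).choose n) *
    ∫ τ in (0:ℝ)..1, ‖tildeF a ((τ - n * ℏ) / ℏ)‖ ^ 2 * (τ / (1 - τ)) ^ n * (1 - τ) ^ (N - 1)

/-- The normalized vectors `ψ^N_n = √(C^N_n)·φ_n`. -/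
def psiNn (N : ℕ) (ℏ : ℝ) (a : ℝ → ℂ) (n : ℕ) : ℂ → ℂ :=
  fun z => (Real.sqrt (CNn N ℏ a n) : ℂ) * phiN N n z

/-!
Expanding `ρ_{e^{it}z}` binomially turns the `t`-integral defining `ψ^a_z` into Fourier
transforms of `a`, one per monomial: `ψ^a_z = Σₙ ã(τ(z)/ℏ - n)·conj(φₙ(z))·φₙ`. In the basis
`ψ^N_n = √(C^N_n)·φₙ` the operator is a weighted shift by `k`, and the coefficient of
`φ_{n-k}` is rewritten through `φ_{n-k}(z) = z^{-k}·μ_k(n)·φₙ(z)`, a factorial identity.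
-/

lemma MeasureTheory.Integrable.cexp_mul {a : ℝ → ℂ} (ha : Integrable a) (y : ℝ) :
    Integrable (fun t : ℝ => Complex.exp (Complex.I * t * y) * a t) := by
  refine ha.bdd_mul (c := 1) (by fun_prop) (Filter.Eventually.of_forall fun t => ?_)
  rw [Complex.norm_exp]
  simp [Complex.mul_re]

lemma integral_cexp_mul_eq_tildeF (a : ℝ → ℂ) (y : ℝ) :
    ∫ t : ℝ, Complex.exp (Complex.I * t * y) * a t
      = (Real.sqrt (2 * Real.pi) : ℂ) * tildeF a y := by
  have hs : (Real.sqrt (2 * Real.pi) : ℂ) ≠ 0 := by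
    simp [Real.sqrt_ne_zero', Real.pi_pos]
  rw [tildeF, Complex.ofReal_inv, ← mul_assoc, mul_inv_cancel₀ hs, one_mul]

lemma rhoN_eq_sum (N : ℕ) (z₀ w : ℂ) :
    rhoN N z₀ w = ∑ n ∈ Finset.range N,
      (N : ℂ) * ((N - 1).choose n : ℂ) * (starRingEnd ℂ) z₀ ^ n * w ^ n := by
  cases N with
  | zero => simp [rhoN]
  | succ N =>
    rw [rhoN, add_comm (1 : ℂ), add_pow, Finset.mul_sum, Nat.add_sub_cancel]
    refine Finset.sum_congr rfl fun n _ => ?_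
    ring

lemma psiA_eq_sum {a : ℝ → ℂ} (ha : Integrable a) (N : ℕ) (ℏ : ℝ) (z w : ℂ) :
    psiA N ℏ a z w = ∑ n ∈ Finset.range N,
      (N : ℂ) * ((N - 1).choose n : ℂ) * tildeF a (tauS z / ℏ - n)
        * (starRingEnd ℂ) z ^ n * w ^ n := by
  have hs : (Real.sqrt (2 * Real.pi) : ℂ) ≠ 0 := by
    simp [Real.sqrt_ne_zero', Real.pi_pos]
  have hintegrand : ∀ t : ℝ,
      a t * Complex.exp (Complex.I * (tauS z) * t / (ℏ : ℂ)) *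
          rhoN N (Complex.exp (Complex.I * t) * z) w / (Real.sqrt (2 * Real.pi) : ℂ)
        = ∑ n ∈ Finset.range N,
          Complex.exp (Complex.I * t * ((tauS z / ℏ - n : ℝ) : ℂ)) * a t *
            ((N : ℂ) * ((N - 1).choose n : ℂ) * (starRingEnd ℂ) z ^ n * w ^ n
              / (Real.sqrt (2 * Real.pi) : ℂ)) := by
    intro t
    rw [rhoN_eq_sum, Finset.mul_sum, Finset.sum_div]
    refine Finset.sum_congr rfl fun n _ => ?_
    have hphase : Complex.exp (Complex.I * (tauS z) * t / (ℏ : ℂ))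
          * (starRingEnd ℂ) (Complex.exp (Complex.I * t)) ^ n
        = Complex.exp (Complex.I * t * ((tauS z / ℏ - n : ℝ) : ℂ)) := by
      rw [← Complex.exp_conj, ← Complex.exp_nat_mul, ← Complex.exp_add]
      congr 1
      simp only [map_mul, Complex.conj_I, Complex.conj_ofReal]
      push_cast
      ring
    rw [map_mul, mul_pow, ← hphase]
    ring
  simp_rw [psiA, hintegrand]
  rw [integral_finsetSum _ fun n _ => (ha.cexp_mul _).mul_const _]
  refine Finset.sum_congr rfl fun n _ => ?_
  rw [integral_mul_const, integral_cexp_mul_eq_tildeF]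
  field_simp

lemma sq_sqrt_factorial_ratio {N n : ℕ} (hn : n < N) :
    Real.sqrt ((N.factorial : ℝ) / (n.factorial * (N - 1 - n).factorial)) ^ 2
      = N * (N - 1).choose n := by
  rw [Real.sq_sqrt (by positivity), div_eq_iff (by positivity),
    ← Nat.mul_factorial_pred (by omega : N ≠ 0),
    ← Nat.choose_mul_factorial_mul_factorial (by omega : n ≤ N - 1)]
  push_cast
  ring

lemma conj_phiN_mul_phiN {N n : ℕ} (hn : n < N) (z w : ℂ) :
    (starRingEnd ℂ) (phiN N n z) * phiN N n w
      = (N : ℂ) * ((N - 1).choose n : ℂ) * (starRingEnd ℂ) z ^ n * w ^ n := by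
  have h := congrArg ((↑) : ℝ → ℂ) (sq_sqrt_factorial_ratio hn)
  push_cast at h
  simp only [phiN, map_mul, map_pow, Complex.conj_ofReal]
  linear_combination (starRingEnd ℂ) z ^ n * w ^ n * h

lemma psiA_eq_sum_phiN {a : ℝ → ℂ} (ha : Integrable a) (N : ℕ) (ℏ : ℝ) (z : ℂ) :
    psiA N ℏ a z = ∑ n ∈ Finset.range N,
      (tildeF a (tauS z / ℏ - n) * (starRingEnd ℂ) (phiN N n z)) • phiN N n := by
  funext w
  rw [psiA_eq_sum ha, Finset.sum_apply]
  refine Finset.sum_congr rfl fun n hn => ?_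
  rw [Pi.smul_apply, smul_eq_mul, mul_assoc (tildeF _ _), conj_phiN_mul_phiN (Finset.mem_range.mp hn)]
  ring

lemma psiA_eq_sum_psiNn {a : ℝ → ℂ} (ha : Integrable a) {N : ℕ} {ℏ : ℝ}
    (hC : ∀ n < N, 0 < CNn N ℏ a n) (z : ℂ) :
    psiA N ℏ a z = ∑ n ∈ Finset.range N,
      (tildeF a (tauS z / ℏ - n) * (starRingEnd ℂ) (phiN N n z)
        / (Real.sqrt (CNn N ℏ a n) : ℂ)) • psiNn N ℏ a n := by
  rw [psiA_eq_sum_phiN ha]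
  refine Finset.sum_congr rfl fun n hn => ?_
  have hsqrt : (Real.sqrt (CNn N ℏ a n) : ℂ) ≠ 0 := by
    exact_mod_cast (Real.sqrt_pos.mpr (hC n (Finset.mem_range.mp hn))).ne'
  funext w
  simp only [Pi.smul_apply, smul_eq_mul, psiNn]
  field_simp

lemma LinearMap.map_sum_smul_of_shift {R M : Type*} [Semiring R] [AddCommMonoid M] [Module R M]
    (T : M →ₗ[R] M) {N k : ℕ} {e : ℕ → M} {g : ℕ → R}
    (hT : ∀ n < N, T (e n) = if n + k < N then g n • e (n + k) else 0) (c : ℕ → R) :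
    T (∑ n ∈ Finset.range N, c n • e n)
      = ∑ n ∈ Finset.range (N - k), (c n * g n) • e (n + k) := by
  have hfilter : (Finset.range N).filter (fun n => n + k < N) = Finset.range (N - k) := by
    ext n
    simp only [Finset.mem_filter, Finset.mem_range]
    omega
  rw [map_sum, ← hfilter, Finset.sum_filter]
  refine Finset.sum_congr rfl fun n hn => ?_
  rw [map_smul, hT n (Finset.mem_range.mp hn)]
  split_ifs
  · rw [smul_smul]
  · rw [smul_zero]

lemma factorial_div_eq_choose_div_mul (N j k m : ℕ) :
    (N.factorial : ℝ) / (j.factorial * (m + k).factorial)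
      = ((j + k).choose k / (m + k).choose k : ℝ)
        * (N.factorial / ((j + k).factorial * m.factorial)) := by
  rw [Nat.cast_choose ℝ (Nat.le_add_left k j), Nat.cast_choose ℝ (Nat.le_add_left k m),
    Nat.add_sub_cancel, Nat.add_sub_cancel]
  field_simp

lemma phiN_eq_zpow_mul_phiN_add {N j k : ℕ} (h : j + k < N) {z : ℂ} (hz : z ≠ 0) :
    phiN N j z = z ^ (-(k : ℤ))
      * (Real.sqrt (((j + k).choose k : ℝ) / ((N - 1 - (j + k) + k).choose k : ℝ)) : ℂ)
      * phiN N (j + k) z := by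
  have hfac := factorial_div_eq_choose_div_mul N j k (N - 1 - (j + k))
  rw [show N - 1 - (j + k) + k = N - 1 - j by omega] at hfac ⊢
  rw [phiN, phiN, hfac, Real.sqrt_mul (by positivity), Complex.ofReal_mul, zpow_neg,
    zpow_natCast, pow_add]
  field_simp

theorem stmt8_general (N : ℕ) (hN : 1 ≤ N) (ℏ : ℝ) (a : SchwartzMap ℝ ℂ)
    (hC : ∀ n : ℕ, n ≤ N - 1 → 0 < CNn N ℏ (⇑a) n)
    (k : ℕ) (hk2 : k ≤ N - 1) (γ : ℝ → ℂ)
    (T : (ℂ → ℂ) →ₗ[ℂ] (ℂ → ℂ))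
    (hT : ∀ n : ℕ, n ≤ N - 1 →
      T (psiNn N ℏ (⇑a) n)
        = if n ≤ N - 1 - k then γ ((n : ℝ) * ℏ) • psiNn N ℏ (⇑a) (n + k) else 0)
    (z : ℂ) (hz : z ≠ 0) :
    T (psiA N ℏ (⇑a) z) = fun w => ∑ n ∈ Finset.Icc k (N - 1),
      ((starRingEnd ℂ) z) ^ (-(k : ℤ))
        * (Real.sqrt ((n.choose k : ℝ) / ((N - 1 - n + k).choose k : ℝ)) : ℂ)
        * (Real.sqrt (CNn N ℏ (⇑a) n / CNn N ℏ (⇑a) (n - k)) : ℂ)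
        * γ (((n : ℝ) - k) * ℏ)
        * tildeF (⇑a) (tauS z / ℏ - ((n : ℝ) - k))
        * (starRingEnd ℂ) (phiN N n z) * phiN N n w := by
  have hC' : ∀ n < N, 0 < CNn N ℏ a n := fun n hn => hC n (by omega)
  have hT' : ∀ n < N, T (psiNn N ℏ a n)
      = if n + k < N then γ (n * ℏ) • psiNn N ℏ a (n + k) else 0 := fun n hn => by
    simp only [hT n (by omega), show n ≤ N - 1 - k ↔ n + k < N by omega]
  have hIcc : Finset.Icc k (N - 1) = Finset.Ico k N := by
    ext n
    simp only [Finset.mem_Icc, Finset.mem_Ico]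
    omega
  rw [psiA_eq_sum_psiNn a.integrable hC', LinearMap.map_sum_smul_of_shift T hT']
  funext w
  rw [Finset.sum_apply, hIcc, Finset.sum_Ico_eq_sum_range]
  refine Finset.sum_congr rfl fun j hj => ?_
  have hjk : j + k < N := by
    have := Finset.mem_range.mp hj
    omega
  rw [add_comm k j, Nat.add_sub_cancel, Nat.cast_add, add_sub_cancel_right,
    Real.sqrt_div (hC' _ hjk).le, phiN_eq_zpow_mul_phiN_add hjk hz]
  simp only [Pi.smul_apply, smul_eq_mul, psiNn, map_mul, map_zpow₀, Complex.conj_ofReal,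
    Complex.ofReal_div]
  ring

/-- upper-diagonal case of Proposition 3.4: for
`𝓝_{k,γ}ψ^N_n = γ(nℏ)·ψ^N_{n+k}` (for `0 ≤ n ≤ N−1−k`, and `0` otherwise), one has, for
`z ≠ 0`,
`𝓝_{k,γ}ψ^a_z = Σ_{n=k}^{N−1} conj(z)^{−k}·μ_k(n)·√(C^N_n/C^N_{n−k})·γ((n−k)ℏ)·
                 ã(τ(z)/ℏ−(n−k))·conj(φ_n(z))·φ_n`. -/
theorem stmt8 (N : ℕ) (hN : 1 ≤ N) (ℏ : ℝ) (hℏ : 0 < ℏ) (a : SchwartzMap ℝ ℂ)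
    (hC : ∀ n : ℕ, n ≤ N - 1 → 0 < CNn N ℏ (⇑a) n)
    (k : ℕ) (hk1 : 1 ≤ k) (hk2 : k ≤ N - 1) (γ : ℝ → ℂ)
    (T : (ℂ → ℂ) →ₗ[ℂ] (ℂ → ℂ))
    (hT : ∀ n : ℕ, n ≤ N - 1 →
      T (psiNn N ℏ (⇑a) n)
        = if n ≤ N - 1 - k then γ ((n : ℝ) * ℏ) • psiNn N ℏ (⇑a) (n + k) else 0)
    (z : ℂ) (hz : z ≠ 0) :
    T (psiA N ℏ (⇑a) z) = fun w => ∑ n ∈ Finset.Icc k (N - 1),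
      ((starRingEnd ℂ) z) ^ (-(k : ℤ))
        * (Real.sqrt ((n.choose k : ℝ) / ((N - 1 - n + k).choose k : ℝ)) : ℂ)
        * (Real.sqrt (CNn N ℏ (⇑a) n / CNn N ℏ (⇑a) (n - k)) : ℂ)
        * γ (((n : ℝ) - k) * ℏ)
        * tildeF (⇑a) (tauS z / ℏ - ((n : ℝ) - k))
        * (starRingEnd ℂ) (phiN N n z) * phiN N n w :=
  stmt8_general N hN ℏ a hC k hk2 γ T hT z hz
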